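/- arXiv:2006.02001 — 3 statements merged into one kernel-verified Lean document; each statement's English description precedes it below -/
import Mathlib

section
/- Let X ≥ 0 be a random variable with CDF F satisfying F(v_α) = 1−α, and suppose F satisfies γ·u ≤ |F(v_α + u) − F(v_α)| for all |u| ≤ 1 with γ > 0. Let Y₁,…,Yₙ be i.i.d. copies of X and set V̂ = Y*_{⌊(1−α)n⌋} (the empirical (1−α)-quantile). Then for any 0 < ε ≤ 1, P(V̂ − v_α > ε) ≤ exp(−2n(γε)²). -/
/-!
If the empirical quantile `V̂ = Y*_{⌊(1-α)n⌋}` exceeds `v_α + ε`, then at most `(1-α)n`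
samples lie below `v_α + ε`, i.e. the empirical CDF at `v_α + ε` is at most `1 - α = F(v_α)`.
By the growth condition this is a deviation of at least `γε` of the empirical CDF below its
mean `F(v_α + ε)`, and the count of samples below a fixed level is a sum of independent
Bernoulli variables, so Hoeffding's inequality bounds its probability by `exp(-2n(γε)²)`.
-/

open MeasureTheory ProbabilityTheory Real Finset

theorem List.Pairwise.countP_le_of_lt_getD {α : Type*} [LinearOrder α] {l : List α}
    (hl : l.Pairwise (· ≤ ·)) {j : ℕ} {c d : α} (h : c < l.getD j d) :
    l.countP (· ≤ c) ≤ j := by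
  rcases lt_or_ge j l.length with hj | hj
  · rw [List.getD_eq_getElem _ _ hj] at h
    have hdrop : (l.drop j).countP (· ≤ c) = 0 := by
      have hsorted := hl.drop (i := j)
      rw [List.drop_eq_getElem_cons hj, List.pairwise_cons] at hsorted
      rw [List.countP_eq_zero, List.drop_eq_getElem_cons hj]
      intro x hx
      simp only [decide_eq_true_eq, not_le]
      rcases List.mem_cons.mp hx with rfl | hx
      · exact h
      · exact h.trans_le (hsorted.1 x hx)
    calc l.countP (· ≤ c) = (l.take j).countP (· ≤ c) + (l.drop j).countP (· ≤ c) := by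
          rw [← List.countP_append, List.take_append_drop]
      _ ≤ j := by
          rw [hdrop, add_zero]
          exact List.countP_le_length.trans (List.length_take_le _ _)
  · exact List.countP_le_length.trans hj

theorem card_filter_eq_countP_ofFn {α : Type*} {n : ℕ} (f : Fin n → α) (p : α → Prop)
    [DecidablePred p] : #{i | p (f i)} = (List.ofFn f).countP p := by
  rw [← Multiset.coe_countP, ← Fin.univ_val_map, Multiset.countP_map]
  rfl

theorem card_filter_le_of_lt_getD_mergeSort {α : Type*} [LinearOrder α] {n : ℕ}
    (f : Fin n → α) {j : ℕ} {c d : α}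
    (h : c < ((List.ofFn f).mergeSort (· ≤ ·)).getD j d) :
    #{i | f i ≤ c} ≤ j := by
  rw [card_filter_eq_countP_ofFn f (· ≤ c), ← (List.mergeSort_perm _ (· ≤ ·)).countP_eq]
  exact (List.pairwise_mergeSort' (· ≤ ·) (List.ofFn f)).countP_le_of_lt_getD h

theorem card_filter_le_mul_of_lt_getD_mergeSort {n : ℕ} (f : Fin n → ℝ) {α c d : ℝ}
    (hα : α ≤ 1)
    (h : c < ((List.ofFn f).mergeSort (· ≤ ·)).getD (⌊(1 - α) * n⌋₊ - 1) d) :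
    (#{i | f i ≤ c} : ℝ) ≤ (1 - α) * n := by
  calc (#{i | f i ≤ c} : ℝ) ≤ ⌊(1 - α) * n⌋₊ := by
        exact_mod_cast (card_filter_le_of_lt_getD_mergeSort f h).trans (Nat.sub_le _ _)
    _ ≤ (1 - α) * n := Nat.floor_le (mul_nonneg (by linarith) n.cast_nonneg)

theorem monotone_measureReal_setOf_le {Ω : Type*} [MeasurableSpace Ω] (μ : Measure Ω)
    [IsFiniteMeasure μ] (X : Ω → ℝ) : Monotone fun u ↦ μ.real {ω | X ω ≤ u} :=
  fun _ _ huv ↦ measureReal_mono fun _ h ↦ le_trans h huv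

theorem measureReal_sum_le_sum_integral_sub_le {Ω ι : Type*} [MeasurableSpace Ω]
    {μ : Measure Ω} [IsProbabilityMeasure μ] [Fintype ι] {X : ι → Ω → ℝ}
    (hX : ∀ i, AEMeasurable (X i) μ) (hX01 : ∀ i, ∀ᵐ ω ∂μ, X i ω ∈ Set.Icc 0 1)
    (hindep : iIndepFun X μ) {s : ℝ} (hs : 0 ≤ s) :
    μ.real {ω | ∑ i, X i ω ≤ ∑ i, μ[X i] - Fintype.card ι * s}
      ≤ exp (-2 * Fintype.card ι * s ^ 2) := by
  have hsubG : ∀ i ∈ (univ : Finset ι),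
      HasSubgaussianMGF (fun ω ↦ μ[X i] - X i ω) (1 / 4) μ := fun i _ ↦ by
    convert (hasSubgaussianMGF_of_mem_Icc (hX i) (hX01 i)).neg using 1
    · ext ω; simp
    · ext; norm_num
  have hcentered : iIndepFun (fun i ω ↦ μ[X i] - X i ω) μ :=
    hindep.comp (fun i x ↦ (∫ ω, X i ω ∂μ) - x) fun _ ↦ by fun_prop
  calc μ.real {ω | ∑ i, X i ω ≤ ∑ i, μ[X i] - Fintype.card ι * s}
      = μ.real {ω | Fintype.card ι * s ≤ ∑ i, (μ[X i] - X i ω)} := by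
        congr 1; ext ω
        simp only [Set.mem_ofPred_eq, Finset.sum_sub_distrib]
        constructor <;> intro h <;> linarith
    _ ≤ exp (-(Fintype.card ι * s) ^ 2 / (2 * ↑(∑ _i : ι, (1 / 4 : NNReal)))) :=
        HasSubgaussianMGF.measure_sum_ge_le_of_iIndepFun hcentered hsubG (by positivity)
    _ = exp (-2 * Fintype.card ι * s ^ 2) := by
        rcases (Nat.cast_nonneg (α := ℝ) (Fintype.card ι)).eq_or_lt with hcard | hcard
        · simp [← hcard]
        · congr 1
          simp only [Finset.sum_const, Finset.card_univ, nsmul_eq_mul]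
          push_cast
          field_simp
          ring

theorem measureReal_card_filter_le_le {Ω ι : Type*} [MeasurableSpace Ω]
    {μ : Measure Ω} [IsProbabilityMeasure μ] [Fintype ι] {Y : ι → Ω → ℝ}
    (hY : ∀ i, Measurable (Y i)) (hindep : iIndepFun Y μ) {c p : ℝ}
    (hp : ∀ i, μ.real {ω | Y i ω ≤ c} = p) {s : ℝ} (hs : 0 ≤ s) :
    μ.real {ω | (#{i | Y i ω ≤ c} : ℝ) ≤ Fintype.card ι * (p - s)}
      ≤ exp (-2 * Fintype.card ι * s ^ 2) := by
  set X : ι → Ω → ℝ := fun i ω ↦ (Set.Iic c).indicator 1 (Y i ω)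
  have hind : Measurable ((Set.Iic c).indicator (1 : ℝ → ℝ)) :=
    measurable_one.indicator measurableSet_Iic
  have hX01 : ∀ i ω, X i ω ∈ Set.Icc 0 1 := fun i ω ↦ by
    by_cases h : Y i ω ≤ c <;> simp [X, h]
  have hmean : ∀ i, μ[X i] = p := fun i ↦ by
    rw [← hp i]
    exact integral_indicator_one ((hY i) measurableSet_Iic)
  have hcount : ∀ ω, ∑ i, X i ω = #{i | Y i ω ≤ c} := fun ω ↦ by
    simp [X, Set.indicator_apply]
  have hbound : μ.real {ω | ∑ i, X i ω ≤ ∑ i, μ[X i] - Fintype.card ι * s} ≤ _ :=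
    measureReal_sum_le_sum_integral_sub_le (fun i ↦ (hind.comp (hY i)).aemeasurable)
      (fun i ↦ ae_of_all μ (hX01 i))
      (hindep.comp (fun _ ↦ (Set.Iic c).indicator 1) fun _ ↦ hind) hs
  simpa only [hcount, hmean, Finset.sum_const, Finset.card_univ, nsmul_eq_mul, mul_sub]
    using hbound

theorem empirical_quantile_upper_deviation_general {Ω : Type*} [MeasurableSpace Ω]
    (μ : Measure Ω) [IsProbabilityMeasure μ] (n : ℕ) (hn : 0 < n)
    (F : ℝ → ℝ)
    (α : ℝ) (hα1 : α < 1)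
    (vα : ℝ)
    (hFvα : F vα = 1 - α)
    (γ : ℝ) (hγ : 0 < γ)
    (hgrowth : ∀ u : ℝ, |u| ≤ 1 → γ * u ≤ |F (vα + u) - F vα|)
    (Y : Fin n → Ω → ℝ) (hYmeas : ∀ i, Measurable (Y i))
    (hindep : iIndepFun Y μ)
    (hF : ∀ i u, F u = (μ {ω | Y i ω ≤ u}).toReal)
    (Vhat : Ω → ℝ)
    (hVhat : ∀ ω, Vhat ω =
      ((List.ofFn fun i => Y i ω).mergeSort (· ≤ ·)).getD (⌊(1 - α) * n⌋₊ - 1) 0)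
    (ε : ℝ) (hε0 : 0 < ε) (hε1 : ε ≤ 1) :
    μ {ω | Vhat ω - vα > ε} ≤ ENNReal.ofReal (Real.exp (-2 * n * (γ * ε) ^ 2)) := by
  have hFmono : Monotone F := by
    rw [funext (hF ⟨0, hn⟩)]
    exact monotone_measureReal_setOf_le μ (Y ⟨0, hn⟩)
  have hgap : F vα + γ * ε ≤ F (vα + ε) := by
    have h := hgrowth ε (by rwa [abs_of_pos hε0])
    rw [abs_of_nonneg (sub_nonneg.mpr (hFmono (by linarith)))] at h
    linarith
  have hsub : {ω | Vhat ω - vα > ε}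
      ⊆ {ω | (#{i | Y i ω ≤ vα + ε} : ℝ) ≤ n * (F (vα + ε) - γ * ε)} := by
    intro ω hω
    have hV : vα + ε < Vhat ω := by linarith [show Vhat ω - vα > ε from hω]
    rw [hVhat] at hV
    calc (#{i | Y i ω ≤ vα + ε} : ℝ) ≤ (1 - α) * n :=
          card_filter_le_mul_of_lt_getD_mergeSort (fun i ↦ Y i ω) hα1.le hV
      _ = n * F vα := by rw [hFvα, mul_comm]
      _ ≤ n * (F (vα + ε) - γ * ε) := mul_le_mul_of_nonneg_left (by linarith) n.cast_nonneg
  have hbound := measureReal_card_filter_le_le (μ := μ) hYmeas hindep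
    (fun i ↦ (hF i (vα + ε)).symm) (mul_nonneg hγ.le hε0.le)
  rw [Fintype.card_fin] at hbound
  calc μ {ω | Vhat ω - vα > ε} ≤ _ := measure_mono hsub
    _ = ENNReal.ofReal (μ.real _) := (ofReal_measureReal (measure_ne_top μ _)).symm
    _ ≤ _ := ENNReal.ofReal_le_ofReal hbound

/-- Under the γ-growth condition on the CDF near `v_α`, the empirical
`(1-α)`-quantile `V̂` built from `n` i.i.d. copies satisfies
`P(V̂ - v_α > ε) ≤ exp(-2n(γε)²)` for any `0 < ε ≤ 1`. -/
theorem empirical_quantile_upper_deviation {Ω : Type*} [MeasurableSpace Ω]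
    (μ : Measure Ω) [IsProbabilityMeasure μ] (n : ℕ) (hn : 0 < n)
    (F : ℝ → ℝ) (hFcont : Continuous F)
    (α : ℝ) (hα0 : 0 < α) (hα1 : α < 1)
    (vα : ℝ) (hvα : vα = sInf {u : ℝ | 1 - α ≤ F u})
    (hFvα : F vα = 1 - α)
    (γ : ℝ) (hγ : 0 < γ)
    (hgrowth : ∀ u : ℝ, |u| ≤ 1 → γ * u ≤ |F (vα + u) - F vα|)
    (Y : Fin n → Ω → ℝ) (hYmeas : ∀ i, Measurable (Y i))
    (hYnonneg : ∀ i ω, 0 ≤ Y i ω)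
    (hindep : iIndepFun Y μ)
    (hF : ∀ i u, F u = (μ {ω | Y i ω ≤ u}).toReal)
    (Vhat : Ω → ℝ)
    (hVhat : ∀ ω, Vhat ω =
      ((List.ofFn fun i => Y i ω).mergeSort (· ≤ ·)).getD (⌊(1 - α) * n⌋₊ - 1) 0)
    (ε : ℝ) (hε0 : 0 < ε) (hε1 : ε ≤ 1) :
    μ {ω | Vhat ω - vα > ε} ≤ ENNReal.ofReal (Real.exp (-2 * n * (γ * ε) ^ 2)) :=
  empirical_quantile_upper_deviation_general μ n hn F α hα1 vα hFvα γ hγ hgrowth Y hYmeas hindep hF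
    Vhat hVhat ε hε0 hε1
end

section
/- Let Z be a random variable, ℓ(w; z) ≥ 0 a loss, α ∈ (0,1), and define f_α(w, v; z) = v + (1/α)·max(ℓ(w; z) − v, 0) with F_α(w, v) = E[f_α(w, v; Z)]. If the CDF of ℓ(w; Z) is continuous, then min over v ∈ ℝ of F_α(w, v) equals C_α(w) = (1/α)·E[ℓ(w;Z)·1{ℓ(w;Z) ≥ v_α(w)}], and the minimum is attained at v = v_α(w). -/
/-!
Write `X = ℓ(w;Z)` and `q = v_α`. For any event `A` with `P(A) = α`,
`E[(X - v)₊] ≥ E[(X - v) 1_A] = E[X 1_A] - v α`, so `F_α(v) ≥ (1/α) E[X 1_A]` for every `v`;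
for `v = q` and `A = {X ≥ q}` this is an equality. Continuity of the CDF makes `{q}` a null set
and `cdf q = 1 - α`, hence `P(X ≥ q) = α`.
-/

open MeasureTheory ProbabilityTheory Set Filter

namespace ProbabilityTheory

variable {ν : Measure ℝ}

lemma bddBelow_setOf_le_cdf {p : ℝ} (hp : 0 < p) : BddBelow {u | p ≤ cdf ν u} := by
  obtain ⟨M, hM⟩ := eventually_atBot.mp ((tendsto_cdf_atBot ν).eventually (eventually_lt_nhds hp))
  refine ⟨M, fun u hu => ?_⟩
  by_contra! hlt
  exact (hM u hlt.le).not_ge hu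

lemma nonempty_setOf_le_cdf {p : ℝ} (hp : p < 1) : {u | p ≤ cdf ν u}.Nonempty :=
  ((tendsto_cdf_atTop ν).eventually (eventually_ge_nhds hp)).exists

lemma cdf_sInf_setOf_le_cdf (hcont : Continuous (cdf ν)) {p : ℝ} (hp0 : 0 < p) (hp1 : p < 1) :
    cdf ν (sInf {u | p ≤ cdf ν u}) = p := by
  set q := sInf {u | p ≤ cdf ν u}
  have hbdd := bddBelow_setOf_le_cdf (ν := ν) hp0
  refine le_antisymm ?_ ((isClosed_le continuous_const hcont).csInf_mem
    (nonempty_setOf_le_cdf hp1) hbdd)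
  refine le_of_tendsto ((hcont.tendsto q).mono_left (nhdsWithin_le_nhds (s := Iio q))) ?_
  filter_upwards [self_mem_nhdsWithin] with u (hu : u < q)
  by_contra! h
  exact (csInf_le hbdd h.le).not_gt hu

lemma measureReal_Ici_of_continuous_cdf [IsProbabilityMeasure ν] (hcont : Continuous (cdf ν))
    (q : ℝ) : ν.real (Ici q) = 1 - cdf ν q := by
  have h := (cdf ν).measure_Ici (tendsto_cdf_atTop ν) q
  rw [measure_cdf, hcont.continuousWithinAt.leftLim_eq] at h
  rw [measureReal_def, h, ENNReal.toReal_ofReal (sub_nonneg.mpr (cdf_le_one ν q))]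

lemma measureReal_Ici_sInf_setOf_le_cdf [IsProbabilityMeasure ν] (hcont : Continuous (cdf ν))
    {α : ℝ} (hα0 : 0 < α) (hα1 : α < 1) : ν.real (Ici (sInf {u | 1 - α ≤ cdf ν u})) = α := by
  rw [measureReal_Ici_of_continuous_cdf hcont,
    cdf_sInf_setOf_le_cdf hcont (by linarith) (by linarith)]
  ring

lemma integral_max_sub_zero_eq_setIntegral_Ici (v : ℝ) :
    ∫ x, max (x - v) 0 ∂ν = ∫ x in Ici v, (x - v) ∂ν := by
  rw [← integral_indicator measurableSet_Ici]
  congr 1 with x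
  by_cases h : v ≤ x
  · simp [h]
  · simp [h, (not_le.mp h).le]

section FiniteMeasure

variable [IsFiniteMeasure ν] (hν : Integrable (fun x => x) ν)
include hν

lemma integrable_max_sub_zero (v : ℝ) : Integrable (fun x => max (x - v) 0) ν :=
  (hν.sub (integrable_const v)).pos_part

lemma setIntegral_sub_le_integral_max_sub_zero {s : Set ℝ} (hs : MeasurableSet s) (v : ℝ) :
    ∫ x in s, (x - v) ∂ν ≤ ∫ x, max (x - v) 0 ∂ν := by
  have hmax := integrable_max_sub_zero hν v
  calc ∫ x in s, (x - v) ∂ν ≤ ∫ x in s, max (x - v) 0 ∂ν :=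
        setIntegral_mono_on (hν.sub (integrable_const v)).integrableOn hmax.integrableOn hs
          fun x _ => le_max_left _ _
    _ ≤ ∫ x, max (x - v) 0 ∂ν :=
        setIntegral_le_integral hmax (Eventually.of_forall fun x => le_max_right _ _)

lemma setIntegral_sub_const (s : Set ℝ) (v : ℝ) :
    ∫ x in s, (x - v) ∂ν = ∫ x in s, x ∂ν - v * ν.real s := by
  rw [integral_sub hν.integrableOn (integrable_const v), setIntegral_const, smul_eq_mul, mul_comm]

end FiniteMeasure

/-- The objective `F_α(v)` of the statement, for a loss with law `ν`. -/
noncomputable def cvarObjective (ν : Measure ℝ) (α v : ℝ) : ℝ :=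
  ∫ x, (v + 1 / α * max (x - v) 0) ∂ν

section ProbabilityMeasure

variable [IsProbabilityMeasure ν] (hν : Integrable (fun x => x) ν)
include hν

lemma cvarObjective_eq (α v : ℝ) :
    cvarObjective ν α v = v + 1 / α * ∫ x, max (x - v) 0 ∂ν := by
  rw [cvarObjective, integral_add (integrable_const v)
    ((integrable_max_sub_zero hν v).const_mul _), integral_const_mul]
  simp

lemma setIntegral_div_le_cvarObjective {α : ℝ} (hα : 0 < α) {s : Set ℝ} (hs : MeasurableSet s)
    (hνs : ν.real s = α) (v : ℝ) : 1 / α * ∫ x in s, x ∂ν ≤ cvarObjective ν α v := by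
  have h := setIntegral_sub_le_integral_max_sub_zero hν hs v
  rw [setIntegral_sub_const hν, hνs] at h
  rw [cvarObjective_eq hν]
  field_simp
  linarith

lemma cvarObjective_eq_setIntegral_Ici {α : ℝ} (hα : α ≠ 0) {q : ℝ} (hq : ν.real (Ici q) = α) :
    cvarObjective ν α q = 1 / α * ∫ x in Ici q, x ∂ν := by
  rw [cvarObjective_eq hν, integral_max_sub_zero_eq_setIntegral_Ici, setIntegral_sub_const hν, hq]
  field_simp
  ring

lemma cvarObjective_le_of_measureReal_Ici {α : ℝ} (hα : 0 < α) {q : ℝ} (hq : ν.real (Ici q) = α)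
    (v : ℝ) : cvarObjective ν α q ≤ cvarObjective ν α v :=
  (cvarObjective_eq_setIntegral_Ici hν hα.ne' hq).trans_le
    (setIntegral_div_le_cvarObjective hν hα measurableSet_Ici hq v)

end ProbabilityMeasure

section Map

variable {Ω : Type*} [MeasurableSpace Ω] {μ : Measure Ω} {X : Ω → ℝ}

lemma cdf_map_apply [IsProbabilityMeasure μ] (hX : AEMeasurable X μ) (u : ℝ) :
    cdf (μ.map X) u = μ.real {ω | X ω ≤ u} := by
  have := Measure.isProbabilityMeasure_map (μ := μ) hX
  rw [cdf_eq_real, measureReal_def, Measure.map_apply_of_aemeasurable hX measurableSet_Iic]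
  rfl

lemma cvarObjective_map (hX : AEMeasurable X μ) (α v : ℝ) :
    cvarObjective (μ.map X) α v = ∫ ω, (v + 1 / α * max (X ω - v) 0) ∂μ :=
  integral_map hX (by fun_prop)

lemma setIntegral_Ici_map (hX : AEMeasurable X μ) (q : ℝ) :
    ∫ x in Ici q, x ∂(μ.map X) = ∫ ω, (if q ≤ X ω then X ω else 0) ∂μ := by
  rw [← integral_indicator measurableSet_Ici,
    integral_map (f := (Ici q).indicator fun x => x) hX
      (measurable_id.indicator measurableSet_Ici).aestronglyMeasurable]
  simp only [indicator_apply, mem_Ici]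

end Map

end ProbabilityTheory

theorem rockafellar_uryasev_cvar_general {Ω 𝒵 W : Type*} [MeasurableSpace Ω]
    (μ : Measure Ω) [IsProbabilityMeasure μ]
    (Z : Ω → 𝒵) (ℓ : W → 𝒵 → ℝ) (w : W)
    (hint : Integrable (fun ω => ℓ w (Z ω)) μ)
    (α : ℝ) (hα0 : 0 < α) (hα1 : α < 1)
    (F : ℝ → ℝ) (hF : ∀ u, F u = (μ {ω | ℓ w (Z ω) ≤ u}).toReal)
    (hFcont : Continuous F)
    (vα : ℝ) (hvα : vα = sInf {u : ℝ | 1 - α ≤ F u})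
    (Fα : ℝ → ℝ)
    (hFα : ∀ v, Fα v = ∫ ω, (v + (1/α) * max (ℓ w (Z ω) - v) 0) ∂μ)
    (Cα : ℝ)
    (hCα : Cα = (1/α) * ∫ ω, (if vα ≤ ℓ w (Z ω) then ℓ w (Z ω) else 0) ∂μ) :
    (∀ v : ℝ, Fα vα ≤ Fα v) ∧ Fα vα = Cα := by
  set X : Ω → ℝ := fun ω => ℓ w (Z ω)
  have hX : AEMeasurable X μ := hint.aemeasurable
  set ν := μ.map X
  have : IsProbabilityMeasure ν := Measure.isProbabilityMeasure_map hX
  have hν : Integrable (fun x => x) ν := (integrable_map_measure (by fun_prop) hX).mpr hint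
  have hcdf : (cdf ν : ℝ → ℝ) = F := funext fun u => by rw [hF, cdf_map_apply hX, measureReal_def]
  have hFα' : Fα = cvarObjective ν α := funext fun v => by rw [hFα, cvarObjective_map hX]
  have hq : ν.real (Ici vα) = α := by
    rw [hvα, ← hcdf]
    exact measureReal_Ici_sInf_setOf_le_cdf (hcdf ▸ hFcont) hα0 hα1
  refine ⟨hFα' ▸ cvarObjective_le_of_measureReal_Ici hν hα0 hq, ?_⟩
  rw [hFα', cvarObjective_eq_setIntegral_Ici hν hα0.ne' hq, setIntegral_Ici_map hX, hCα]

/-- Rockafellar–Uryasev: for a fixed `w`, with `f_α(w,v;z) = v + (1/α)[ℓ(w;z)-v]₊`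
and `F_α(w,v) = E f_α(w,v;Z)`, if the CDF of `ℓ(w;Z)` is continuous then
`min_v F_α(w,v) = C_α(w)`, attained at `v = v_α(w)`. -/
theorem rockafellar_uryasev_cvar {Ω 𝒵 W : Type*} [MeasurableSpace Ω]
    (μ : Measure Ω) [IsProbabilityMeasure μ]
    (Z : Ω → 𝒵) (ℓ : W → 𝒵 → ℝ) (w : W)
    (hlossnonneg : ∀ w' z, 0 ≤ ℓ w' z)
    (hmeas : Measurable (fun ω => ℓ w (Z ω)))
    (hint : Integrable (fun ω => ℓ w (Z ω)) μ)
    (α : ℝ) (hα0 : 0 < α) (hα1 : α < 1)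
    (F : ℝ → ℝ) (hF : ∀ u, F u = (μ {ω | ℓ w (Z ω) ≤ u}).toReal)
    (hFcont : Continuous F)
    (vα : ℝ) (hvα : vα = sInf {u : ℝ | 1 - α ≤ F u})
    (Fα : ℝ → ℝ)
    (hFα : ∀ v, Fα v = ∫ ω, (v + (1/α) * max (ℓ w (Z ω) - v) 0) ∂μ)
    (Cα : ℝ)
    (hCα : Cα = (1/α) * ∫ ω, (if vα ≤ ℓ w (Z ω) then ℓ w (Z ω) else 0) ∂μ) :
    (∀ v : ℝ, Fα vα ≤ Fα v) ∧ Fα vα = Cα :=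
  rockafellar_uryasev_cvar_general μ Z ℓ w hint α hα0 hα1 F hF hFcont vα hvα Fα hFα Cα hCα
end

section
/- Let W ⊆ ℝ^d be convex and let w ↦ ℓ(w; z) be convex and λ-Lipschitz (in the ℓ₂ norm) for every z. Then for any 0 < α < 1, the map (w, v) ↦ f_α(w, v; z) = v + (1/α)·max(ℓ(w; z) − v, 0) on W × ℝ is convex and λ_α-Lipschitz, where λ_α = max{1, √(λ² + (1−α)²)/α}. -/
open MeasureTheory Real

set_option maxHeartbeats 2000000 in
/-- If `w ↦ ℓ(w;z)` is convex and `λ`-Lipschitz (ℓ₂ norm) on a convex `W ⊆ ℝ^d`,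
then `(w,v) ↦ f_α(w,v;z) = v + (1/α)·max(ℓ(w;z) - v, 0)` is convex on `W × ℝ` and
`λ_α`-Lipschitz in the ℓ₂ norm on the joint argument, where
`λ_α = max{1, √(λ² + (1-α)²)/α}`. -/
theorem f_alpha_convex_lipschitz {d : ℕ} {𝒵 : Type*}
    (W : Set (EuclideanSpace ℝ (Fin d))) (hWconv : Convex ℝ W)
    (ℓ : EuclideanSpace ℝ (Fin d) → 𝒵 → ℝ) (lam : ℝ) (hlam : 0 ≤ lam)
    (hconv : ∀ z, ConvexOn ℝ W (fun w => ℓ w z))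
    (hlip : ∀ z, ∀ w ∈ W, ∀ w' ∈ W, |ℓ w z - ℓ w' z| ≤ lam * ‖w - w'‖)
    (α : ℝ) (hα0 : 0 < α) (hα1 : α < 1)
    (fα : EuclideanSpace ℝ (Fin d) × ℝ → 𝒵 → ℝ)
    (hfα : ∀ p z, fα p z = p.2 + (1/α) * max (ℓ p.1 z - p.2) 0)
    (lamα : ℝ) (hlamα : lamα = max 1 (Real.sqrt (lam ^ 2 + (1 - α) ^ 2) / α)) :
    ∀ z, ConvexOn ℝ (W ×ˢ (Set.univ : Set ℝ)) (fun p => fα p z) ∧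
      ∀ p ∈ W ×ˢ (Set.univ : Set ℝ), ∀ q ∈ W ×ˢ (Set.univ : Set ℝ),
        |fα p z - fα q z| ≤ lamα * Real.sqrt (‖p.1 - q.1‖ ^ 2 + (p.2 - q.2) ^ 2) := by
  intro z
  have hαpos : (0:ℝ) < 1/α := by positivity
  have hα1' : (1:ℝ) ≤ 1/α := one_le_one_div hα0 hα1.le
  -- rewrite fα as a max of two functions
  have hrw : ∀ p : EuclideanSpace ℝ (Fin d) × ℝ,
      fα p z = max ((1/α) * ℓ p.1 z + (1 - 1/α) * p.2) p.2 := by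
    intro p
    rw [hfα]
    rcases le_total (ℓ p.1 z) p.2 with h | h
    · rw [max_eq_right (by linarith : ℓ p.1 z - p.2 ≤ 0),
        max_eq_right (by nlinarith : (1/α) * ℓ p.1 z + (1 - 1/α) * p.2 ≤ p.2)]
      ring
    · rw [max_eq_left (by linarith : (0:ℝ) ≤ ℓ p.1 z - p.2),
        max_eq_left (by nlinarith : p.2 ≤ (1/α) * ℓ p.1 z + (1 - 1/α) * p.2)]
      ring
  constructor
  · -- Convexity
    refine ⟨hWconv.prod convex_univ, ?_⟩
    intro p hp q hq a b ha hb hab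
    simp only [hrw]
    have h1 : (a • p + b • q).1 = a • p.1 + b • q.1 := rfl
    have h2 : (a • p + b • q).2 = a * p.2 + b * q.2 := rfl
    have hℓ : ℓ ((a • p + b • q).1) z ≤ a * ℓ p.1 z + b * ℓ q.1 z := by
      rw [h1]
      simpa [smul_eq_mul] using (hconv z).2 hp.1 hq.1 ha hb hab
    rw [h2]
    have hp1 : (1/α) * ℓ p.1 z + (1 - 1/α) * p.2
        ≤ max ((1/α) * ℓ p.1 z + (1 - 1/α) * p.2) p.2 := le_max_left _ _
    have hp2 : p.2 ≤ max ((1/α) * ℓ p.1 z + (1 - 1/α) * p.2) p.2 := le_max_right _ _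
    have hq1 : (1/α) * ℓ q.1 z + (1 - 1/α) * q.2
        ≤ max ((1/α) * ℓ q.1 z + (1 - 1/α) * q.2) q.2 := le_max_left _ _
    have hq2 : q.2 ≤ max ((1/α) * ℓ q.1 z + (1 - 1/α) * q.2) q.2 := le_max_right _ _
    simp only [smul_eq_mul]
    apply max_le
    · nlinarith [mul_le_mul_of_nonneg_left hℓ hαpos.le,
        mul_le_mul_of_nonneg_left hp1 ha, mul_le_mul_of_nonneg_left hq1 hb]
    · nlinarith [mul_le_mul_of_nonneg_left hp2 ha, mul_le_mul_of_nonneg_left hq2 hb]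
  · -- Lipschitz
    intro p hp q hq
    obtain ⟨x, hxdef⟩ : ∃ x : ℝ, x = ‖p.1 - q.1‖ := ⟨_, rfl⟩
    obtain ⟨y, hydef⟩ : ∃ y : ℝ, y = p.2 - q.2 := ⟨_, rfl⟩
    obtain ⟨s, hsdef⟩ : ∃ s : ℝ, s = Real.sqrt (x ^ 2 + y ^ 2) := ⟨_, rfl⟩
    obtain ⟨t, htdef⟩ : ∃ t : ℝ, t = Real.sqrt (lam ^ 2 + (1 - α) ^ 2) := ⟨_, rfl⟩
    rw [← hxdef, ← hydef, ← hsdef]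
    rw [← htdef] at hlamα
    have hx0 : 0 ≤ x := hxdef ▸ norm_nonneg _
    have hs0 : 0 ≤ s := hsdef ▸ Real.sqrt_nonneg _
    have ht0 : 0 ≤ t := htdef ▸ Real.sqrt_nonneg _
    have hs2 : s ^ 2 = x ^ 2 + y ^ 2 := by
      rw [hsdef]; exact Real.sq_sqrt (by positivity)
    have ht2 : t ^ 2 = lam ^ 2 + (1 - α) ^ 2 := by
      rw [htdef]; exact Real.sq_sqrt (by positivity)
    have hys : |y| ≤ s := by
      rw [hsdef, ← Real.sqrt_sq_eq_abs]
      exact Real.sqrt_le_sqrt (by nlinarith [sq_nonneg x])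
    have hxs : x ≤ s := by
      have h' : x = Real.sqrt (x ^ 2) := by rw [Real.sqrt_sq hx0]
      rw [h', hsdef]
      exact Real.sqrt_le_sqrt (by nlinarith [sq_nonneg y])
    have hlam1 : 1 ≤ lamα := hlamα ▸ le_max_left _ _
    have hlam2 : t / α ≤ lamα := hlamα ▸ le_max_right _ _
    rw [hrw p, hrw q]
    refine le_trans (abs_max_sub_max_le_max _ _ _ _) (max_le ?_ ?_)
    · -- first branch
      have hd : ((1/α) * ℓ p.1 z + (1 - 1/α) * p.2) - ((1/α) * ℓ q.1 z + (1 - 1/α) * q.2)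
          = (1/α) * (ℓ p.1 z - ℓ q.1 z) + (1 - 1/α) * y := by rw [hydef]; ring
      have hℓd : |ℓ p.1 z - ℓ q.1 z| ≤ lam * x := hxdef ▸ hlip z p.1 hp.1 q.1 hq.1
      have habs : |((1/α) * ℓ p.1 z + (1 - 1/α) * p.2) - ((1/α) * ℓ q.1 z + (1 - 1/α) * q.2)|
          ≤ (1/α) * (lam * x) + (1/α - 1) * |y| := by
        rw [hd]
        refine le_trans (abs_add_le _ _) ?_
        rw [abs_mul, abs_mul, abs_of_pos hαpos,
          abs_of_nonpos (by linarith : (1:ℝ) - 1/α ≤ 0)]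
        have h := mul_le_mul_of_nonneg_left hℓd hαpos.le
        linarith [abs_nonneg y]
      -- Cauchy-Schwarz step
      have hA0 : 0 ≤ lam * x + (1 - α) * |y| := by
        have : (0:ℝ) ≤ 1 - α := by linarith
        positivity
      have hcs : (lam * x + (1 - α) * |y|) ^ 2 ≤ (lam ^ 2 + (1 - α) ^ 2) * (x ^ 2 + y ^ 2) := by
        nlinarith [sq_nonneg (lam * |y| - (1 - α) * x), sq_abs y]
      have hAts : lam * x + (1 - α) * |y| ≤ t * s := by
        nlinarith [hcs, hs2, ht2, hA0, mul_nonneg ht0 hs0, sq_abs y]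
      have hfin : (1/α) * (lam * x) + (1/α - 1) * |y| ≤ (t / α) * s := by
        have key : (1/α) * (lam * x + (1 - α) * |y|) ≤ (1/α) * (t * s) :=
          mul_le_mul_of_nonneg_left hAts hαpos.le
        have heq : (1/α) * (lam * x + (1 - α) * |y|)
            = (1/α) * (lam * x) + (1/α - 1) * |y| := by field_simp; try ring
        rw [← heq]
        calc (1/α) * (lam * x + (1 - α) * |y|) ≤ (1/α) * (t * s) := key
          _ = (t / α) * s := by ring
      calc |((1/α) * ℓ p.1 z + (1 - 1/α) * p.2) - ((1/α) * ℓ q.1 z + (1 - 1/α) * q.2)|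
          ≤ (1/α) * (lam * x) + (1/α - 1) * |y| := habs
        _ ≤ (t / α) * s := hfin
        _ ≤ lamα * s := mul_le_mul_of_nonneg_right hlam2 hs0
    · -- second branch
      calc |p.2 - q.2| = |y| := by rw [hydef]
        _ ≤ s := hys
        _ ≤ lamα * s := by nlinarith
end
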